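/- Let 1 ≤ k ≤ p and let g ∈ G_{X,Y}(𝔄_k) := {g ∈ G(𝔄_k) : gX = X and gY = Y}. Then gỸ = Ỹ and g maps the subspace W(p) := Span{Z₁,…,Z_p, Z̃₁,…,Z̃_p} onto itself. -/
import Mathlib


/-- Index type for the basis {X, Y, Z_1,...,Z_p, Ỹ, Z̃_1,...,Z̃_p} of V = ℝ^{3+2p}. -/
inductive Idx (p : ℕ) : Type where
  | X : Idx p
  | Y : Idx p
  | Z : Fin p → Idx p
  | Yt : Idx p
  | Zt : Fin p → Idx p
  deriving DecidableEq, Fintype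

/-- V := ℝ^{3+2p}, realized as functions on the index set. -/
abbrev V (p : ℕ) : Type := Idx p → ℝ

/-- The basis vectors of `V p`. -/
noncomputable def e (p : ℕ) (a : Idx p) : V p := fun b => if b = a then 1 else 0

/-- `T p k` is the totally symmetric multilinear form (with the first two of its `k+2`
arguments singled out) so that `B^k(u,v,w,x;η) = u_X x_X T(v,w,η) - ...`.
For `1 ≤ k ≤ p` its nonzero components are: one argument is `Z_k`, the others `Y`;
for `k = 0` the nonzero components are `T(Y,Ỹ) = T(Z_i,Z̃_i) = 1`;
for `k > p` (used for `k = p+1, p+2`) the only nonzero component has all arguments `Y`. -/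
noncomputable def T (p k : ℕ) (a b : V p) (η : Fin k → V p) : ℝ :=
  if hk : 1 ≤ k ∧ k ≤ p then
    (a (Idx.Z ⟨k - 1, by omega⟩) * b Idx.Y + a Idx.Y * b (Idx.Z ⟨k - 1, by omega⟩)) *
        ∏ j, η j Idx.Y +
      a Idx.Y * b Idx.Y *
        ∑ j, η j (Idx.Z ⟨k - 1, by omega⟩) * ∏ l ∈ Finset.univ.erase j, η l Idx.Y
  else if k = 0 then
    a Idx.Y * b Idx.Yt + b Idx.Y * a Idx.Yt +
      ∑ i : Fin p, (a (Idx.Z i) * b (Idx.Zt i) + b (Idx.Z i) * a (Idx.Zt i))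
  else a Idx.Y * b Idx.Y * ∏ j, η j Idx.Y

/-- The tensor `B^k ∈ ⊗^{4+k} V*`: it has the curvature symmetries in the first four
arguments, is totally symmetric in the last `k`, and its nonzero components on basis
vectors, up to these symmetries, are exactly those prescribed in the paper:
`B⁰(X,Y,Ỹ,X) = B⁰(X,Z_i,Z̃_i,X) = 1`;
`B^k(X,Y,Z_k,X;Y,…,Y) = B^k(X,Y,Y,X;Z_k,Y,…,Y) = … = B^k(X,Y,Y,X;Y,…,Y,Z_k) = 1` for `1 ≤ k ≤ p`;
`B^{p+1}(X,Y,Y,X;Y,…,Y) = 1` and `B^{p+2}(X,Y,Y,X;Y,…,Y) = 1`. -/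
noncomputable def Bc (p k : ℕ) (u v w x : V p) (η : Fin k → V p) : ℝ :=
  u Idx.X * x Idx.X * T p k v w η - u Idx.X * w Idx.X * T p k v x η -
    v Idx.X * x Idx.X * T p k u w η + v Idx.X * w Idx.X * T p k u x η

/-- `GA p k g` means `g ∈ G(𝔄_k)`, i.e. the invertible linear map `g` of `V` satisfies
`g* B^i = B^i` for all `0 ≤ i ≤ k`. -/
def GA (p k : ℕ) (g : V p ≃ₗ[ℝ] V p) : Prop :=
  ∀ i, i ≤ k → ∀ u v w x : V p, ∀ η : Fin i → V p,
    Bc p i (g u) (g v) (g w) (g x) (fun j => g (η j)) = Bc p i u v w x η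

/-- W(p) := Span{Z_1,…,Z_p, Z̃_1,…,Z̃_p} ⊆ V. -/
def WpSpan (p : ℕ) : Submodule ℝ (V p) :=
  Submodule.span ℝ {v : V p | (∃ i, v = e p (Idx.Z i)) ∨ ∃ i, v = e p (Idx.Zt i)}

lemma T0_eval (p : ℕ) (a b : V p) (η : Fin 0 → V p) :
    T p 0 a b η = a Idx.Y * b Idx.Yt + b Idx.Y * a Idx.Yt +
      ∑ i : Fin p, (a (Idx.Z i) * b (Idx.Zt i) + b (Idx.Z i) * a (Idx.Zt i)) := by
  simp [T]

lemma Tk_eval (p k : ℕ) (hk1 : 1 ≤ k) (hk2 : k ≤ p) (a b : V p) :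
    T p k a b (fun _ => e p Idx.Y) =
      a (Idx.Z ⟨k - 1, by omega⟩) * b Idx.Y + a Idx.Y * b (Idx.Z ⟨k - 1, by omega⟩) := by
  rw [T, dif_pos ⟨hk1, hk2⟩]
  simp [e]

lemma T_X_right (p k : ℕ) (a : V p) (η : Fin k → V p) : T p k a (e p Idx.X) η = 0 := by
  rw [T]
  split
  · simp [e]
  · split <;> simp [e]

lemma T_X_left (p k : ℕ) (b : V p) (η : Fin k → V p) : T p k (e p Idx.X) b η = 0 := by
  rw [T]
  split
  · simp [e]
  · split <;> simp [e]

lemma Bc_XvwX (p k : ℕ) (v w : V p) (η : Fin k → V p) :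
    Bc p k (e p Idx.X) v w (e p Idx.X) η = T p k v w η := by
  simp [Bc, T_X_left, T_X_right, e]

lemma T0_Y_left (p : ℕ) (b : V p) (η : Fin 0 → V p) :
    T p 0 (e p Idx.Y) b η = b Idx.Yt := by
  simp [T0_eval, e]

lemma T0_Yt_left (p : ℕ) (b : V p) (η : Fin 0 → V p) :
    T p 0 (e p Idx.Yt) b η = b Idx.Y := by
  simp [T0_eval, e]

lemma T0_Zt_right (p : ℕ) (i : Fin p) (a : V p) (η : Fin 0 → V p) :
    T p 0 a (e p (Idx.Zt i)) η = a (Idx.Z i) := by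
  simp [T0_eval, e, Finset.sum_ite_eq']

lemma T0_Z_right (p : ℕ) (i : Fin p) (a : V p) (η : Fin 0 → V p) :
    T p 0 a (e p (Idx.Z i)) η = a (Idx.Zt i) := by
  simp [T0_eval, e, Finset.sum_ite_eq']

lemma T0_eta (p : ℕ) (a b : V p) (η η' : Fin 0 → V p) :
    T p 0 a b η = T p 0 a b η' := by
  rw [T0_eval, T0_eval]

def Wker (p : ℕ) : Submodule ℝ (V p) where
  carrier := {v | v Idx.X = 0 ∧ v Idx.Y = 0 ∧ v Idx.Yt = 0}
  add_mem' := by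
    rintro a b ⟨a1, a2, a3⟩ ⟨b1, b2, b3⟩
    refine ⟨?_, ?_, ?_⟩ <;> simp_all [Pi.add_apply]
  zero_mem' := by refine ⟨rfl, rfl, rfl⟩
  smul_mem' := by
    rintro c a ⟨a1, a2, a3⟩
    refine ⟨?_, ?_, ?_⟩ <;> simp_all [Pi.smul_apply]

lemma mem_Wker (p : ℕ) (v : V p) :
    v ∈ Wker p ↔ v Idx.X = 0 ∧ v Idx.Y = 0 ∧ v Idx.Yt = 0 := Iff.rfl

lemma WpSpan_eq_Wker (p : ℕ) : WpSpan p = Wker p := by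
  apply le_antisymm
  · rw [WpSpan, Submodule.span_le]
    rintro v (⟨i, rfl⟩ | ⟨i, rfl⟩) <;>
      exact ⟨by simp [e], by simp [e], by simp [e]⟩
  · intro v hv
    obtain ⟨h1, h2, h3⟩ := (mem_Wker p v).mp hv
    have hv' : v = (∑ i : Fin p, v (Idx.Z i) • e p (Idx.Z i)) +
        ∑ i : Fin p, v (Idx.Zt i) • e p (Idx.Zt i) := by
      funext a
      cases a <;>
        simp [e, h1, h2, h3, Finset.sum_apply, Pi.smul_apply, Finset.sum_ite_eq,
          Finset.sum_ite_eq']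
    rw [hv']
    refine Submodule.add_mem _ (Submodule.sum_mem _ fun i _ => ?_)
      (Submodule.sum_mem _ fun i _ => ?_) <;>
      refine Submodule.smul_mem _ _ (Submodule.subset_span ?_)
    · exact Or.inl ⟨i, rfl⟩
    · exact Or.inr ⟨i, rfl⟩

/-- for `1 ≤ k ≤ p` and `g ∈ G_{X,Y}(𝔄_k)`, we have `g Ỹ = Ỹ` and
`g` maps `W(p)` onto itself. -/
theorem statement13 (p k : ℕ) (hp : 1 ≤ p) (hk1 : 1 ≤ k) (hk2 : k ≤ p)
    (g : V p ≃ₗ[ℝ] V p) (hg : GA p k g)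
    (hX : g (e p Idx.X) = e p Idx.X) (hY : g (e p Idx.Y) = e p Idx.Y) :
    g (e p Idx.Yt) = e p Idx.Yt ∧
    Submodule.map g.toLinearMap (WpSpan p) = WpSpan p := by
  set η0 : Fin 0 → V p := fun j => j.elim0 with hη0
  -- invariance of T
  have T_inv : ∀ i, i ≤ k → ∀ v w (η : Fin i → V p),
      T p i (g v) (g w) (fun j => g (η j)) = T p i v w η := by
    intro i hi v w η
    have h := hg i hi (e p Idx.X) v w (e p Idx.X) η
    rwa [hX, Bc_XvwX, Bc_XvwX] at h
  have T0_inv : ∀ v w, T p 0 (g v) (g w) η0 = T p 0 v w η0 := by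
    intro v w
    have h := T_inv 0 (Nat.zero_le k) v w η0
    rwa [T0_eta p (g v) (g w) _ η0] at h
  set i0 : Fin p := ⟨0, hp⟩ with hi0
  -- X-coordinate preservation
  have eq1 : ∀ u : V p, g u Idx.X - g (e p (Idx.Z i0)) Idx.X * u (Idx.Z i0) = u Idx.X := by
    intro u
    have h := hg 0 (Nat.zero_le k) u (e p (Idx.Z i0)) (e p (Idx.Zt i0)) (e p Idx.X) η0
    rw [hX] at h
    simp only [Bc, T_X_right, T_inv 0 (Nat.zero_le k), T0_Zt_right] at h
    simp only [e, if_pos rfl] at h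
    simp only [reduceCtorEq, if_false, if_true] at h
    linarith [h]
  have hgZtX : g (e p (Idx.Zt i0)) Idx.X = 0 := by
    have h := eq1 (e p (Idx.Zt i0))
    simp only [e, reduceCtorEq, if_false, if_true] at h
    linarith [h]
  have eq2 : ∀ u : V p, g u Idx.X - g (e p (Idx.Zt i0)) Idx.X * u (Idx.Zt i0) = u Idx.X := by
    intro u
    have h := hg 0 (Nat.zero_le k) u (e p (Idx.Zt i0)) (e p (Idx.Z i0)) (e p Idx.X) η0
    rw [hX] at h
    simp only [Bc, T_X_right, T_inv 0 (Nat.zero_le k), T0_Z_right] at h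
    simp only [e, if_pos rfl] at h
    simp only [reduceCtorEq, if_false, if_true] at h
    linarith [h]
  have hXc : ∀ u : V p, g u Idx.X = u Idx.X := by
    intro u
    have h := eq2 u
    rw [hgZtX] at h
    linarith [h]
  -- Yt-coordinate preservation
  have hYtc : ∀ v : V p, g v Idx.Yt = v Idx.Yt := by
    intro v
    have h := T0_inv (e p Idx.Y) v
    rwa [hY, T0_Y_left, T0_Y_left] at h
  -- the symmetric form s from T^k
  have hsv : ∀ v w : V p,
      g v (Idx.Z ⟨k - 1, by omega⟩) * g w Idx.Y + g v Idx.Y * g w (Idx.Z ⟨k - 1, by omega⟩) =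
      v (Idx.Z ⟨k - 1, by omega⟩) * w Idx.Y + v Idx.Y * w (Idx.Z ⟨k - 1, by omega⟩) := by
    intro v w
    have h := T_inv k le_rfl v w (fun _ => e p Idx.Y)
    simp only [hY] at h
    rwa [Tk_eval p k hk1 hk2, Tk_eval p k hk1 hk2] at h
  have hKc : ∀ w : V p, g w (Idx.Z ⟨k - 1, by omega⟩) = w (Idx.Z ⟨k - 1, by omega⟩) := by
    intro w
    have h := hsv (e p Idx.Y) w
    rw [hY] at h
    simp only [e, if_pos rfl, reduceCtorEq, if_false, if_true] at h
    linarith [h]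
  have hgKY : g (e p (Idx.Z ⟨k - 1, by omega⟩)) Idx.Y = 0 := by
    have h := hsv (e p (Idx.Z ⟨k - 1, by omega⟩)) (e p (Idx.Z ⟨k - 1, by omega⟩))
    have h2 := hKc (e p (Idx.Z ⟨k - 1, by omega⟩))
    simp only [e, if_pos rfl, reduceCtorEq, if_false, if_true] at h h2
    rw [h2] at h
    linarith [h]
  have hYc : ∀ w : V p, g w Idx.Y = w Idx.Y := by
    intro w
    have h := hsv (e p (Idx.Z ⟨k - 1, by omega⟩)) w
    have h2 := hKc (e p (Idx.Z ⟨k - 1, by omega⟩))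
    simp only [e, if_pos rfl, reduceCtorEq, if_false, if_true] at h2
    rw [h2, hgKY] at h
    simp only [e, if_pos rfl, reduceCtorEq, if_false, if_true] at h
    linarith [h]
  -- g fixes Yt
  have hT0gYt : ∀ b : V p, T p 0 (g (e p Idx.Yt)) b η0 = b Idx.Y := by
    intro b
    have hb : g (g.symm b) = b := g.apply_symm_apply b
    have h := T0_inv (e p Idx.Yt) (g.symm b)
    rw [hb, T0_Yt_left] at h
    rw [h, ← hYc (g.symm b), hb]
  have hgYt : g (e p Idx.Yt) = e p Idx.Yt := by
    funext a
    cases a with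
    | X => rw [hXc]
    | Y => rw [hYc]
    | Yt => rw [hYtc]
    | Z i =>
        have h := hT0gYt (e p (Idx.Zt i))
        rw [T0_Zt_right] at h
        rw [h]
        simp [e]
    | Zt i =>
        have h := hT0gYt (e p (Idx.Z i))
        rw [T0_Z_right] at h
        rw [h]
        simp [e]
  refine ⟨hgYt, ?_⟩
  rw [WpSpan_eq_Wker]
  ext w
  simp only [Submodule.mem_map, LinearEquiv.coe_coe, mem_Wker]
  constructor
  · rintro ⟨v, ⟨h1, h2, h3⟩, rfl⟩
    exact ⟨(hXc v).trans h1, (hYc v).trans h2, (hYtc v).trans h3⟩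
  · rintro ⟨h1, h2, h3⟩
    refine ⟨g.symm w, ⟨?_, ?_, ?_⟩, g.apply_symm_apply w⟩
    · rw [← hXc (g.symm w), g.apply_symm_apply]; exact h1
    · rw [← hYc (g.symm w), g.apply_symm_apply]; exact h2
    · rw [← hYtc (g.symm w), g.apply_symm_apply]; exact h3
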